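/- For all parameters A, B, C ∈ ℂ with (C;q)_n ≠ 0 for all n, and all x, y ∈ ℂ with |x| < 1 and |y| < 1, the bibasic Humbert function satisfies Φ₁(A,B;C;q,q₁;x,y) = A·Φ₁(A,B;C;q,q₁;qx,qy) + (1−A)·Φ₁(qA,B;C;q,q₁;x,y). (Equation (2.7), with A playing the role of q^{a−1}.) -/

import Mathlib

/-! The identity holds term by term: `(1 - A) (qA;q)_n = (A;q)_n (1 - A qⁿ)`, and replacing
`(x, y)` by `(qx, qy)` multiplies the `(ℓ, k)` term by `q^(ℓ+k)`. Adding the series termwise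
needs their convergence, which follows from the boundedness of the coefficients: each `(z;q)_n`
converges to the infinite product `∏ (1 - z qʳ)`, which is nonzero when no factor vanishes, so
both `(z;q)_n` and its inverse are bounded. -/

open Complex

/-- The q-shifted factorial (z;q)_n = prod_{r=0}^{n-1} (1 - z q^r). -/
noncomputable def qPoch (q z : ℂ) (n : ℕ) : ℂ :=
  ∏ r ∈ Finset.range n, (1 - z * q ^ r)

/-- The bibasic Humbert hypergeometric function Φ₁ on two independent bases q and q₁. -/
noncomputable def Phi1 (q q1 A B C x y : ℂ) : ℂ :=
  ∑' p : ℕ × ℕ,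
    qPoch q A (p.1 + p.2) * qPoch q1 B p.1 /
      (qPoch q C (p.1 + p.2) * qPoch q1 q1 p.1 * qPoch q q p.2) * x ^ p.1 * y ^ p.2

/-- The Jackson p-derivative. -/
noncomputable def jackson (p : ℂ) (f : ℂ → ℂ) (x : ℂ) : ℂ :=
  (f x - f (p * x)) / ((1 - p) * x)

open Filter Topology

lemma qPoch_succ (q z : ℂ) (n : ℕ) : qPoch q z (n + 1) = qPoch q z n * (1 - z * q ^ n) :=
  Finset.prod_range_succ _ n

lemma qPoch_succ' (q z : ℂ) (n : ℕ) : qPoch q z (n + 1) = (1 - z) * qPoch q (q * z) n := by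
  simp only [qPoch, Finset.prod_range_succ', pow_succ, pow_zero, mul_one]
  rw [mul_comm]
  exact congrArg _ (Finset.prod_congr rfl fun r _ => by ring)

lemma one_sub_mul_qPoch_mul (q z : ℂ) (n : ℕ) :
    (1 - z) * qPoch q (q * z) n = qPoch q z n * (1 - z * q ^ n) := by
  rw [← qPoch_succ', qPoch_succ]

section Convergence

variable {q : ℂ}

lemma qPoch_self_ne_zero (hq : ‖q‖ < 1) (n : ℕ) : qPoch q q n ≠ 0 := by
  refine Finset.prod_ne_zero_iff.2 fun r _ h => ?_
  have h1 : 1 = ‖q‖ ^ (r + 1) := by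
    rw [← norm_pow, pow_succ', ← sub_eq_zero.1 h, norm_one]
  exact (pow_lt_one₀ (norm_nonneg q) hq r.succ_ne_zero).ne' h1

lemma summable_norm_mul_pow (hq : ‖q‖ < 1) (z : ℂ) :
    Summable fun r : ℕ => ‖z * q ^ r‖ := by
  simpa [norm_mul, norm_pow] using
    (summable_geometric_of_lt_one (norm_nonneg q) hq).mul_left ‖z‖

lemma tendsto_qPoch (hq : ‖q‖ < 1) (z : ℂ) :
    Tendsto (qPoch q z) atTop (𝓝 (∏' r : ℕ, (1 - z * q ^ r))) := by
  have h := (multipliable_one_add_of_summable (f := fun r => -(z * q ^ r))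
    (by simpa using summable_norm_mul_pow hq z)).hasProd.tendsto_prod_nat
  simp only [← sub_eq_add_neg] at h
  exact h

lemma tprod_one_sub_mul_pow_ne_zero (hq : ‖q‖ < 1) {z : ℂ} (hz : ∀ n, qPoch q z n ≠ 0) :
    ∏' r : ℕ, (1 - z * q ^ r) ≠ 0 := by
  have hfactor (r : ℕ) : 1 + -(z * q ^ r) ≠ 0 := by
    have h := hz (r + 1)
    rw [qPoch_succ] at h
    simpa [← sub_eq_add_neg] using right_ne_zero_of_mul h
  simpa [← sub_eq_add_neg] using
    tprod_one_add_ne_zero_of_summable hfactor (by simpa using summable_norm_mul_pow hq z)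

lemma exists_norm_qPoch_le (hq : ‖q‖ < 1) (z : ℂ) : ∃ M, ∀ n, ‖qPoch q z n‖ ≤ M := by
  obtain ⟨M, hM⟩ := (tendsto_qPoch hq z).norm.bddAbove_range
  exact ⟨M, fun n => hM ⟨n, rfl⟩⟩

lemma exists_norm_inv_qPoch_le (hq : ‖q‖ < 1) {z : ℂ} (hz : ∀ n, qPoch q z n ≠ 0) :
    ∃ M, ∀ n, ‖(qPoch q z n)⁻¹‖ ≤ M := by
  obtain ⟨M, hM⟩ :=
    ((tendsto_qPoch hq z).inv₀ (tprod_one_sub_mul_pow_ne_zero hq hz)).norm.bddAbove_range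
  exact ⟨M, fun n => hM ⟨n, rfl⟩⟩

end Convergence

lemma norm_mul_lt_one {R : Type*} [SeminormedRing R] {a b : R} (ha : ‖a‖ < 1)
    (hb : ‖b‖ < 1) : ‖a * b‖ < 1 :=
  (norm_mul_le a b).trans_lt (mul_lt_one_of_nonneg_of_lt_one_left (norm_nonneg a) ha hb.le)

lemma summable_norm_pow_mul_pow {x y : ℂ} (hx : ‖x‖ < 1) (hy : ‖y‖ < 1) :
    Summable fun p : ℕ × ℕ => ‖x ^ p.1 * y ^ p.2‖ :=
  Summable.mul_norm (by simpa using summable_geometric_of_lt_one (norm_nonneg x) hx)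
    (by simpa using summable_geometric_of_lt_one (norm_nonneg y) hy)

noncomputable def phi1Term (q q1 A B C x y : ℂ) (p : ℕ × ℕ) : ℂ :=
  qPoch q A (p.1 + p.2) * qPoch q1 B p.1 /
    (qPoch q C (p.1 + p.2) * qPoch q1 q1 p.1 * qPoch q q p.2) * x ^ p.1 * y ^ p.2

lemma summable_phi1Term {q q1 C : ℂ} (hq : ‖q‖ < 1) (hq1 : ‖q1‖ < 1)
    (hC : ∀ n, qPoch q C n ≠ 0) (A B : ℂ) {x y : ℂ} (hx : ‖x‖ < 1) (hy : ‖y‖ < 1) :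
    Summable (phi1Term q q1 A B C x y) := by
  obtain ⟨MA, hMA⟩ := exists_norm_qPoch_le hq A
  obtain ⟨MB, hMB⟩ := exists_norm_qPoch_le hq1 B
  obtain ⟨MC, hMC⟩ := exists_norm_inv_qPoch_le hq hC
  obtain ⟨M1, hM1⟩ := exists_norm_inv_qPoch_le hq1 (qPoch_self_ne_zero hq1)
  obtain ⟨M0, hM0⟩ := exists_norm_inv_qPoch_le hq (qPoch_self_ne_zero hq)
  refine .of_norm_bounded
    ((summable_norm_pow_mul_pow hx hy).mul_left (MA * MB * MC * M1 * M0)) fun p => ?_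
  have hterm : phi1Term q q1 A B C x y p = qPoch q A (p.1 + p.2) * qPoch q1 B p.1
      * (qPoch q C (p.1 + p.2))⁻¹ * (qPoch q1 q1 p.1)⁻¹ * (qPoch q q p.2)⁻¹
      * (x ^ p.1 * y ^ p.2) := by
    simp only [phi1Term, div_eq_mul_inv, mul_inv]
    ring
  have hMA0 := (norm_nonneg _).trans (hMA 0)
  have hMB0 := (norm_nonneg _).trans (hMB 0)
  have hMC0 := (norm_nonneg _).trans (hMC 0)
  have hM10 := (norm_nonneg _).trans (hM1 0)
  rw [hterm]
  simp only [norm_mul]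
  gcongr
  exacts [hMA _, hMB _, hMC _, hM1 _, hM0 _]

lemma phi1Term_eq (q q1 A B C x y : ℂ) (p : ℕ × ℕ) :
    phi1Term q q1 A B C x y p =
      A * phi1Term q q1 A B C (q * x) (q * y) p + (1 - A) * phi1Term q q1 (q * A) B C x y p := by
  have hpow : (q * x) ^ p.1 * (q * y) ^ p.2 = q ^ (p.1 + p.2) * (x ^ p.1 * y ^ p.2) := by ring
  simp only [phi1Term]
  linear_combination (-(A * qPoch q A (p.1 + p.2) * qPoch q1 B p.1 /
      (qPoch q C (p.1 + p.2) * qPoch q1 q1 p.1 * qPoch q q p.2))) * hpow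
    - qPoch q1 B p.1 / (qPoch q C (p.1 + p.2) * qPoch q1 q1 p.1 * qPoch q q p.2)
      * x ^ p.1 * y ^ p.2 * one_sub_mul_qPoch_mul q A (p.1 + p.2)

theorem stmt6_general (q q1 A B C x y : ℂ)
    (hq1 : ‖q‖ < 1)
    (hq11 : ‖q1‖ < 1)
    (hC : ∀ n : ℕ, qPoch q C n ≠ 0)
    (hx : ‖x‖ < 1) (hy : ‖y‖ < 1) :
    Phi1 q q1 A B C x y =
      A * Phi1 q q1 A B C (q * x) (q * y)
        + (1 - A) * Phi1 q q1 (q * A) B C x y := by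
  have hshift :=
    summable_phi1Term hq1 hq11 hC A B (norm_mul_lt_one hq1 hx) (norm_mul_lt_one hq1 hy)
  have hraise := summable_phi1Term hq1 hq11 hC (q * A) B hx hy
  change ∑' p, phi1Term q q1 A B C x y p = A * ∑' p, phi1Term q q1 A B C (q * x) (q * y) p
    + (1 - A) * ∑' p, phi1Term q q1 (q * A) B C x y p
  rw [← tsum_mul_left, ← tsum_mul_left, ← (hshift.mul_left A).tsum_add (hraise.mul_left (1 - A))]
  exact tsum_congr (phi1Term_eq q q1 A B C x y)

theorem stmt6 (q q1 A B C x y : ℂ)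
    (hq0 : 0 < ‖q‖) (hq1 : ‖q‖ < 1)
    (hq10 : 0 < ‖q1‖) (hq11 : ‖q1‖ < 1)
    (hC : ∀ n : ℕ, qPoch q C n ≠ 0)
    (hx : ‖x‖ < 1) (hy : ‖y‖ < 1) :
    Phi1 q q1 A B C x y =
      A * Phi1 q q1 A B C (q * x) (q * y)
        + (1 - A) * Phi1 q q1 (q * A) B C x y :=
  stmt6_general q q1 A B C x y hq1 hq11 hC hx hy
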